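/- arXiv:2512.08468 — 2 statements merged into one kernel-verified Lean document; each statement's English description precedes it below -/
import Mathlib

section
/- Assume the pre-diffeo-valued field structure is dense. Then O ≠ K, and every fiber of d is dense in O: for every y ∈ k, every a ∈ O, and every γ ∈ Γ, there exists r ∈ R with d(r) = y and v(a − r) > γ. -/
/-- `q : K` is algebraic over the prime field `𝔽_p`. -/
def AlgebraicOverPrime (p : ℕ) {K : Type*} [Field K] [CharP K p] (q : K) : Prop :=
  ∃ f : Polynomial (ZMod p), f ≠ 0 ∧ Polynomial.eval₂ (ZMod.castHom dvd_rfl K) q f = 0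

/-- A pre-diffeo-valued field structure on a field `K` of characteristic `p`,
with value group `Γ`, residue field `k` and mock `K/M` module `D`.
Maps defined on subrings (`res`, `d`, `π`, the scalar action of `O` on `D`) are
encoded as total functions whose behaviour is only constrained on the relevant subring. -/
structure PreDiffeoValued (p : ℕ) (K : Type*) [Field K]
    (Γ : Type*) [AddCommGroup Γ] [LinearOrder Γ] [IsOrderedAddMonoid Γ]
    (k : Type*) [Field k] (D : Type*) [AddCommGroup D] where
  /-- the valuation, with `⊤` playing the role of `∞` -/
  v : K → WithTop Γ
  v_surj : ∀ γ : Γ, ∃ x : K, v x = (γ : WithTop Γ)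
  v_eq_top_iff : ∀ x : K, v x = ⊤ ↔ x = 0
  v_mul : ∀ x y : K, v (x * y) = v x + v y
  v_add : ∀ x y : K, min (v x) (v y) ≤ v (x + y)
  /-- the valuation ring `O = {x : v x ≥ 0}` (with maximal ideal `M = {x : v x > 0}`) -/
  O : Subring K
  mem_O_iff : ∀ x : K, x ∈ O ↔ 0 ≤ v x
  /-- the residue map `O → k` -/
  res : K → k
  res_add : ∀ x ∈ O, ∀ y ∈ O, res (x + y) = res x + res y
  res_mul : ∀ x ∈ O, ∀ y ∈ O, res (x * y) = res x * res y
  res_one : res 1 = 1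
  res_surjective : ∀ z : k, ∃ x ∈ O, res x = z
  res_eq_zero_iff : ∀ x ∈ O, (res x = 0 ↔ 0 < v x)
  /-- the scalar action of `O` on `D` -/
  smul : K → D → D
  smul_add : ∀ a ∈ O, ∀ x y : D, smul a (x + y) = smul a x + smul a y
  add_smul : ∀ a ∈ O, ∀ b ∈ O, ∀ x : D, smul (a + b) x = smul a x + smul b x
  mul_smul : ∀ a ∈ O, ∀ b ∈ O, ∀ x : D, smul (a * b) x = smul a (smul b x)
  one_smul : ∀ x : D, smul 1 x = x
  /-- `D` is a divisible `O`-module -/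
  divisible : ∀ a ∈ O, a ≠ 0 → ∀ y : D, ∃ x : D, smul a x = y
  /-- any two elements of `D` are comparable under the divisibility order -/
  total : ∀ x y : D, (∃ a ∈ O, x = smul a y) ∨ (∃ a ∈ O, y = smul a x)
  /-- the `O`-module embedding of the residue field `k` into `D` -/
  phi : k → D
  phi_add : ∀ z w : k, phi (z + w) = phi z + phi w
  phi_injective : Function.Injective phi
  phi_smul : ∀ a ∈ O, ∀ z : k, phi (res a * z) = smul a (phi z)
  /-- the subring `R ⊆ O` -/
  R : Subring K
  R_le_O : (R : Set K) ⊆ (O : Set K)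
  /-- the surjective derivation `d : R → k`, with `Q = ker d` -/
  d : K → k
  d_add : ∀ x ∈ R, ∀ y ∈ R, d (x + y) = d x + d y
  d_leibniz : ∀ x ∈ R, ∀ y ∈ R, d (x * y) = res x * d y + res y * d x
  d_surjective : ∀ z : k, ∃ x ∈ R, d x = z
  /-- the surjective `Q`-module map `π : O → D` with kernel `Q` -/
  pi : K → D
  pi_add : ∀ x ∈ O, ∀ y ∈ O, pi (x + y) = pi x + pi y
  pi_qsmul : ∀ q ∈ R, d q = 0 → ∀ x ∈ O, pi (q * x) = smul q (pi x)
  pi_surjective : ∀ y : D, ∃ x ∈ O, pi x = y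
  pi_eq_zero_iff : ∀ x ∈ O, (pi x = 0 ↔ x ∈ R ∧ d x = 0)
  pi_eq_phi_d : ∀ x ∈ R, pi x = phi (d x)
  /-- in characteristic `2`, squares of elements of `O` lie in `Q` -/
  char_two_sq : p = 2 → ∀ a ∈ O, a ^ 2 ∈ R ∧ d (a ^ 2) = 0
  /-- in odd characteristic, `π` is a derivation -/
  char_odd_pi : p ≠ 2 → ∀ a ∈ O, ∀ b ∈ O, pi (a * b) = smul a (pi b) + smul b (pi a)

namespace PreDiffeoValued

variable {p : ℕ} {K : Type*} [Field K] {Γ : Type*} [AddCommGroup Γ] [LinearOrder Γ] [IsOrderedAddMonoid Γ]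
  {k : Type*} [Field k] {D : Type*} [AddCommGroup D]

/-- The constant ring `Q = ker d`, as a subset of `K`. -/
def Q (P : PreDiffeoValued p K Γ k D) : Set K := {x | x ∈ P.R ∧ P.d x = 0}

/-- The pre-diffeo-valued structure is dense: `Q` is dense in `O` for the valuation topology. -/
def IsDense (P : PreDiffeoValued p K Γ k D) : Prop :=
  ∀ a ∈ P.O, ∀ γ : Γ, ∃ q ∈ P.Q, (γ : WithTop Γ) < P.v (a - q)

end PreDiffeoValued

namespace PreDiffeoValued

variable {p : ℕ} {K : Type*} [Field K] {Γ : Type*} [AddCommGroup Γ] [LinearOrder Γ]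
  [IsOrderedAddMonoid Γ] {k : Type*} [Field k] {D : Type*} [AddCommGroup D]
  {P : PreDiffeoValued p K Γ k D}

theorem eq_zero_of_O_eq_univ (hO : (P.O : Set K) = Set.univ) (γ : Γ) : γ = 0 := by
  have nonneg : ∀ δ : Γ, 0 ≤ δ := fun δ ↦ by
    obtain ⟨x, hx⟩ := P.v_surj δ
    have hxO : x ∈ P.O := by simp [← SetLike.mem_coe, hO]
    exact_mod_cast hx ▸ (P.mem_O_iff x).1 hxO
  exact le_antisymm (neg_nonneg.mp (nonneg (-γ))) (nonneg γ)

theorem eq_of_pos_v_sub_of_O_eq_univ (hO : (P.O : Set K) = Set.univ) {x y : K}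
    (h : 0 < P.v (x - y)) : x = y := by
  by_contra hne
  obtain ⟨g, hg⟩ := WithTop.ne_top_iff_exists.mp
    fun htop ↦ hne (sub_eq_zero.mp ((P.v_eq_top_iff _).mp htop))
  rw [← hg, eq_zero_of_O_eq_univ hO g] at h
  exact lt_irrefl _ h

-- If `O = K` the value group is trivial, so density at `γ = 0` puts all of `O` into `Q = ker d`, contradicting surjectivity of `d`.
theorem IsDense.O_ne_univ (hdense : P.IsDense) : (P.O : Set K) ≠ Set.univ := by
  intro hO
  obtain ⟨x, hxR, hdx⟩ := P.d_surjective 1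
  obtain ⟨q, ⟨-, hdq⟩, hv⟩ := hdense x (P.R_le_O hxR) 0
  rw [eq_of_pos_v_sub_of_O_eq_univ hO hv, hdq] at hdx
  exact zero_ne_one hdx

theorem IsDense.exists_mem_R_d_eq_lt_v_sub (hdense : P.IsDense) (y : k) {a : K} (ha : a ∈ P.O)
    (γ : Γ) : ∃ r ∈ P.R, P.d r = y ∧ (γ : WithTop Γ) < P.v (a - r) := by
  obtain ⟨r₀, hr₀R, hdr₀⟩ := P.d_surjective y
  obtain ⟨q, ⟨hqR, hdq⟩, hv⟩ := hdense (a - r₀) (sub_mem ha (P.R_le_O hr₀R)) γ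
  refine ⟨r₀ + q, add_mem hr₀R hqR, by rw [P.d_add r₀ hr₀R q hqR, hdr₀, hdq, add_zero], ?_⟩
  rwa [← sub_sub]

end PreDiffeoValued

theorem O_ne_K_and_fibers_of_d_dense_general
    {p : ℕ} {K : Type*} [Field K]
    {Γ : Type*} [AddCommGroup Γ] [LinearOrder Γ] [IsOrderedAddMonoid Γ]
    {k : Type*} [Field k] {D : Type*} [AddCommGroup D]
    (P : PreDiffeoValued p K Γ k D)
    (hdense : P.IsDense) :
    ((P.O : Set K) ≠ Set.univ) ∧
    (∀ y : k, ∀ a ∈ P.O, ∀ γ : Γ,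
      ∃ r ∈ P.R, P.d r = y ∧ (γ : WithTop Γ) < P.v (a - r)) :=
  ⟨hdense.O_ne_univ, fun y _ ha γ ↦ hdense.exists_mem_R_d_eq_lt_v_sub y ha γ⟩

/-- If the pre-diffeo-valued field structure is dense, then `O ≠ K`
and every fiber of `d` is dense in `O`: for every `y ∈ k`, `a ∈ O` and `γ ∈ Γ` there is
`r ∈ R` with `d r = y` and `v (a - r) > γ`. -/
theorem O_ne_K_and_fibers_of_d_dense
    {p : ℕ} (hp : p.Prime) {K : Type*} [Field K] [CharP K p]
    {Γ : Type*} [AddCommGroup Γ] [LinearOrder Γ] [IsOrderedAddMonoid Γ]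
    {k : Type*} [Field k] {D : Type*} [AddCommGroup D]
    (P : PreDiffeoValued p K Γ k D)
    (hdense : P.IsDense) :
    ((P.O : Set K) ≠ Set.univ) ∧
    (∀ y : k, ∀ a ∈ P.O, ∀ γ : Γ,
      ∃ r ∈ P.R, P.d r = y ∧ (γ : WithTop Γ) < P.v (a - r)) :=
  O_ne_K_and_fibers_of_d_dense_general P hdense
end

section
/- If α ∈ K is wild, then α + 1 ≠ 0 and β := α/(α + 1) is wild. -/
/-- `α ∈ K` is wild with respect to the subring `R`: `α ∉ R` and `(α - q)⁻¹ ∉ R` for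
every `q` in the relative algebraic closure `k₀` of `𝔽₂` in `K` with `q ≠ α`. -/
def IsWild {K : Type*} [Field K] [CharP K 2] (R : Subring K) (α : K) : Prop :=
  α ∉ R ∧ ∀ q : K, AlgebraicOverPrime 2 q → q ≠ α → (α - q)⁻¹ ∉ R

/-!
Wildness is preserved by the translations `α ↦ α + c` with `c ∈ k₀` and by the inversion
`α ↦ α⁻¹`, since these maps permute `k₀` and, for `q ∈ k₀`, turn `(α - q)⁻¹` into an affine
expression in some `(α - q')⁻¹` with coefficients in `k₀ ⊆ R`. In characteristic 2,
`α / (α + 1) = (α + 1)⁻¹ + 1` is a composite of such maps.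
-/

/-- The subfield `k₀` of `K`; `ZMod.algebra` is not a global instance, so it is supplied here. -/
def primeAlgebraicClosure (p : ℕ) [Fact p.Prime] (K : Type*) [Field K] [CharP K p] :
    Subfield K :=
  letI := ZMod.algebra K p
  (algebraicClosure (ZMod p) K).toSubfield

section AlgebraicOverPrime

variable {p : ℕ} [Fact p.Prime] {K : Type*} [Field K] [CharP K p] {q r : K}

theorem mem_primeAlgebraicClosure_iff :
    q ∈ primeAlgebraicClosure p K ↔ AlgebraicOverPrime p q := by
  let := ZMod.algebra K p
  exact mem_algebraicClosure_iff

theorem algebraicOverPrime_zero : AlgebraicOverPrime p (0 : K) :=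
  mem_primeAlgebraicClosure_iff.1 (zero_mem _)

theorem algebraicOverPrime_one : AlgebraicOverPrime p (1 : K) :=
  mem_primeAlgebraicClosure_iff.1 (one_mem _)

theorem AlgebraicOverPrime.inv (hq : AlgebraicOverPrime p q) : AlgebraicOverPrime p q⁻¹ :=
  mem_primeAlgebraicClosure_iff.1 (inv_mem (mem_primeAlgebraicClosure_iff.2 hq))

theorem AlgebraicOverPrime.sub (hq : AlgebraicOverPrime p q) (hr : AlgebraicOverPrime p r) :
    AlgebraicOverPrime p (q - r) :=
  mem_primeAlgebraicClosure_iff.1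
    (sub_mem (mem_primeAlgebraicClosure_iff.2 hq) (mem_primeAlgebraicClosure_iff.2 hr))

end AlgebraicOverPrime

namespace IsWild

variable {K : Type*} [Field K] [CharP K 2] {R : Subring K} {α : K}

theorem ne_zero (hα : IsWild R α) : α ≠ 0 :=
  fun h => hα.1 (h ▸ R.zero_mem)

theorem add (hk0 : ∀ q : K, AlgebraicOverPrime 2 q → q ∈ R) (hα : IsWild R α) {c : K}
    (hc : AlgebraicOverPrime 2 c) : IsWild R (α + c) := by
  refine ⟨fun h => hα.1 (by simpa using R.sub_mem h (hk0 c hc)), fun q hq hqα => ?_⟩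
  have hqc : q - c ≠ α := fun h => hqα (by rw [← h]; ring)
  rw [show α + c - q = α - (q - c) by ring]
  exact hα.2 (q - c) (hq.sub hc) hqc

theorem inv (hk0 : ∀ q : K, AlgebraicOverPrime 2 q → q ∈ R) (hα : IsWild R α) :
    IsWild R α⁻¹ := by
  have hα0 := hα.ne_zero
  refine ⟨fun h => ?_, fun q hq hqα h => ?_⟩
  · exact hα.2 0 algebraicOverPrime_zero hα0.symm (by simpa using h)
  · by_cases hq0 : q = 0
    · exact hα.1 (by simpa [hq0] using h)
    have hqα' : q⁻¹ ≠ α := fun h => hqα (by rw [← h, inv_inv])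
    have hqα1 : q * α - 1 ≠ 0 := fun h => hqα (eq_inv_of_mul_eq_one_left (sub_eq_zero.1 h))
    have key : (α - q⁻¹)⁻¹ = -q * (1 + q * (α⁻¹ - q)⁻¹) := by
      rw [show α⁻¹ - q = -(q * α - 1) / α by field_simp; ring,
        show α - q⁻¹ = (q * α - 1) / q by field_simp, inv_div, inv_div]
      field_simp
      ring
    apply hα.2 q⁻¹ hq.inv hqα'
    rw [key]
    have hqR := hk0 q hq
    exact R.mul_mem (R.neg_mem hqR) (R.add_mem R.one_mem (R.mul_mem hqR h))

end IsWild

/-- Let `K` be a field of characteristic 2 and `R` a subring of `K`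
containing `k₀ = 𝔽₂^alg ∩ K`.  If `α ∈ K` is wild, then `α + 1 ≠ 0` and
`β := α / (α + 1)` is wild. -/
theorem wild_fractional_linear
    {K : Type*} [Field K] [CharP K 2]
    (R : Subring K)
    (hk0 : ∀ q : K, AlgebraicOverPrime 2 q → q ∈ R) :
    ∀ α : K, IsWild R α → α + 1 ≠ 0 ∧ IsWild R (α / (α + 1)) := by
  intro α hα
  have hα1 : IsWild R (α + 1) := hα.add hk0 algebraicOverPrime_one
  have hβ : α / (α + 1) = (α + 1)⁻¹ + 1 :=
    calc α / (α + 1) = 1 - (α + 1)⁻¹ := by field_simp [hα1.ne_zero]; ring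
      _ = (α + 1)⁻¹ + 1 := by rw [CharTwo.sub_eq_add, add_comm]
  exact ⟨hα1.ne_zero, hβ ▸ (hα1.inv hk0).add hk0 algebraicOverPrime_one⟩
end
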